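/- For every NautiLOD expression n there exists an LDQL query q(?x) with single free variable ?x that is equivalent to n, i.e., for every Web of Linked Data W=(D,adoc) and all URIs u,u' with u ∈ dom(adoc): u' ∈ ⟦n⟧_W^u if and only if the mapping {?x↦u'} belongs to ⟦q(?x)⟧_W^{{u}}. -/
import Mathlib


namespace LDQLFormal

noncomputable section
open Classical

/-! ### Basic RDF model -/

abbrev URI := ℕ
abbrev BNodeId := ℕ
abbrev LitId := ℕ
abbrev Var := ℕ
abbrev Doc := ℕ

/-- Subject terms: URIs or blank nodes. -/
inductive Subj where
  | uri (u : URI)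
  | bnode (b : BNodeId)
deriving DecidableEq

/-- RDF terms (objects): URIs, blank nodes, or literals. -/
inductive Obj where
  | uri (u : URI)
  | bnode (b : BNodeId)
  | lit (l : LitId)
deriving DecidableEq

structure RDFTriple where
  s : Subj
  p : URI
  o : Obj
deriving DecidableEq

def Subj.toObj : Subj → Obj
  | .uri u => .uri u
  | .bnode b => .bnode b

/-- The set of URIs occurring in an RDF triple. -/
def urisOf (t : RDFTriple) : Set URI :=
  {u | t.s = .uri u ∨ t.p = u ∨ t.o = .uri u}

/-- A Web of Linked Data: a finite set of documents, the data in each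
document (a finite set of RDF triples), and a surjective partial function
`adoc` from URIs to documents. -/
structure Web where
  docs : Set Doc
  finite_docs : docs.Finite
  data : Doc → Finset RDFTriple
  adoc : URI → Option Doc
  adoc_mem : ∀ u d, adoc u = some d → d ∈ docs
  adoc_surj : ∀ d ∈ docs, ∃ u, adoc u = some d

/-- Link graph edge `(d, (t,u), d')`. -/
def Web.edge (W : Web) (d : Doc) (t : RDFTriple) (u : URI) (d' : Doc) : Prop :=
  d ∈ W.docs ∧ t ∈ W.data d ∧ u ∈ urisOf t ∧ W.adoc u = some d'

/-! ### Link patterns -/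

/-- Components of a link pattern drawn from `U ∪ {*, +}`. -/
inductive LPUP where
  | uri (u : URI)
  | star
  | plus
deriving DecidableEq

/-- Components of a link pattern drawn from `U ∪ Lit ∪ {*, +}`. -/
inductive LPULP where
  | uri (u : URI)
  | lit (l : LitId)
  | star
  | plus
deriving DecidableEq

structure LinkPattern where
  c1 : LPUP
  c2 : LPUP
  c3 : LPULP

def matchSubj (y : LPUP) (uctx : URI) (x : Subj) : Prop :=
  match y with
  | .uri w => x = .uri w
  | .star => True
  | .plus => x = .uri uctx

def matchPred (y : LPUP) (uctx : URI) (x : URI) : Prop :=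
  match y with
  | .uri w => x = w
  | .star => True
  | .plus => x = uctx

def matchObj (y : LPULP) (uctx : URI) (x : Obj) : Prop :=
  match y with
  | .uri w => x = .uri w
  | .lit l => x = .lit l
  | .star => True
  | .plus => x = .uri uctx

/-- An edge with label `(t,u)` matches a link pattern in the context of `uctx`. -/
def lpMatch (lp : LinkPattern) (uctx : URI) (t : RDFTriple) (u : URI) : Prop :=
  ((lp.c1 = .star ∧ t.s = .uri u) ∨ (lp.c2 = .star ∧ t.p = u) ∨ (lp.c3 = .star ∧ t.o = .uri u))
  ∧ matchSubj lp.c1 uctx t.s ∧ matchPred lp.c2 uctx t.p ∧ matchObj lp.c3 uctx t.o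

/-! ### Solution mappings -/

abbrev Mapping := Var → Option Obj

def mdom (μ : Mapping) : Set Var := {v | μ v ≠ none}

def emptyMap : Mapping := fun _ => none

def single (v : Var) (o : Obj) : Mapping := fun w => if w = v then some o else none

def compatible (μ1 μ2 : Mapping) : Prop :=
  ∀ v a b, μ1 v = some a → μ2 v = some b → a = b

def munion (μ1 μ2 : Mapping) : Mapping := fun v =>
  match μ1 v with
  | some a => some a
  | none => μ2 v

/-- Join of two sets of solution mappings. -/
def mjoin (Ω1 Ω2 : Set Mapping) : Set Mapping :=
  {μ | ∃ μ1 ∈ Ω1, ∃ μ2 ∈ Ω2, compatible μ1 μ2 ∧ μ = munion μ1 μ2}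

/-- Restriction of a mapping to a finite set of variables. -/
def restrictV (V : Finset Var) (μ : Mapping) : Mapping := fun v =>
  if v ∈ V then μ v else none

/-! ### SPARQL graph patterns -/

inductive PTerm where
  | var (v : Var)
  | term (o : Obj)
deriving DecidableEq

structure TriplePattern where
  sj : PTerm
  pr : PTerm
  ob : PTerm
deriving DecidableEq

def PTerm.varsOf : PTerm → Set Var
  | .var v => {v}
  | .term _ => ∅

def TriplePattern.varsOf (t : TriplePattern) : Set Var :=
  t.sj.varsOf ∪ t.pr.varsOf ∪ t.ob.varsOf

def pval (μ : Mapping) : PTerm → Option Obj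
  | .var v => μ v
  | .term o => some o

def objToSubj : Obj → Option Subj
  | .uri u => some (.uri u)
  | .bnode b => some (.bnode b)
  | .lit _ => none

def objToURI : Obj → Option URI
  | .uri u => some u
  | _ => none

/-- `tpInst μ tp = some t` iff `μ[tp] = t` (all variables of `tp` bound by `μ`
and the instantiation is a well-formed RDF triple). -/
def tpInst (μ : Mapping) (t : TriplePattern) : Option RDFTriple := do
  let s ← pval μ t.sj
  let s' ← objToSubj s
  let p ← pval μ t.pr
  let p' ← objToURI p
  let o ← pval μ t.ob
  return ⟨s', p', o⟩

/-- Filter conditions. -/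
inductive Cond where
  | eq (a b : PTerm)
  | neq (a b : PTerm)
  | and (c1 c2 : Cond)
  | or (c1 c2 : Cond)
  | not (c : Cond)

def condHolds (μ : Mapping) : Cond → Prop
  | .eq a b => ∃ x, pval μ a = some x ∧ pval μ b = some x
  | .neq a b => ∃ x y, pval μ a = some x ∧ pval μ b = some y ∧ x ≠ y
  | .and c1 c2 => condHolds μ c1 ∧ condHolds μ c2
  | .or c1 c2 => condHolds μ c1 ∨ condHolds μ c2
  | .not c => ¬ condHolds μ c

/-- SPARQL graph patterns, built from triple patterns with
AND, UNION, OPT, FILTER, GRAPH and BIND. -/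
inductive GP where
  | empty
  | tp (t : TriplePattern)
  | and (g1 g2 : GP)
  | union (g1 g2 : GP)
  | opt (g1 g2 : GP)
  | filter (g : GP) (c : Cond)
  | graphU (u : URI) (g : GP)
  | graphV (v : Var) (g : GP)
  | bind (g : GP) (o : Obj) (v : Var)

/-- An RDF dataset: a default graph together with named graphs. -/
structure RDFDataset where
  dflt : Set RDFTriple
  named : URI → Option (Set RDFTriple)

/-- Standard set-based SPARQL evaluation of a graph pattern over an RDF
dataset `D` with active graph `G`. -/
def evalGP (D : RDFDataset) : GP → Set RDFTriple → Set Mapping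
  | .empty, _ => {emptyMap}
  | .tp t, G => {μ | mdom μ = t.varsOf ∧ ∃ tr ∈ G, tpInst μ t = some tr}
  | .and g1 g2, G => mjoin (evalGP D g1 G) (evalGP D g2 G)
  | .union g1 g2, G => evalGP D g1 G ∪ evalGP D g2 G
  | .opt g1 g2, G =>
      mjoin (evalGP D g1 G) (evalGP D g2 G) ∪
        {μ | μ ∈ evalGP D g1 G ∧ ∀ μ2 ∈ evalGP D g2 G, ¬ compatible μ μ2}
  | .filter g c, G => {μ | μ ∈ evalGP D g G ∧ condHolds μ c}
  | .graphU u g, _ => {μ | ∃ G', D.named u = some G' ∧ μ ∈ evalGP D g G'}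
  | .graphV v g, _ =>
      {μ | ∃ u G', D.named u = some G' ∧ ∃ μ' ∈ evalGP D g G',
            compatible μ' (single v (.uri u)) ∧ μ = munion μ' (single v (.uri u))}
  | .bind g o v, G => {μ' | ∃ μ ∈ evalGP D g G, μ v = none ∧ μ' = munion μ (single v o)}

/-! ### LDQL syntax -/

mutual
/-- LDQL queries. -/
inductive LDQL where
  | base (l : LPE) (P : GP)
  | seedU (U0 : Finset URI) (q : LDQL)
  | seedV (v : Var) (q : LDQL)
  | qand (q1 q2 : LDQL)
  | qunion (q1 q2 : LDQL)
  | proj (V0 : Finset Var) (q : LDQL)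

/-- Link path expressions. -/
inductive LPE where
  | eps
  | pat (lp : LinkPattern)
  | seq (l1 l2 : LPE)
  | alt (l1 l2 : LPE)
  | star (l : LPE)
  | test (l : LPE)
  | sub (v : Var) (q : LDQL)
end

/-- `dataset_W(U0)`. -/
def datasetW (W : Web) (U0 : Set URI) : RDFDataset where
  dflt := {t | ∃ u ∈ U0, ∃ d, W.adoc u = some d ∧ t ∈ W.data d}
  named := fun u =>
    if u ∈ U0 then (W.adoc u).map (fun d => ((W.data d : Finset RDFTriple) : Set RDFTriple))
    else none

/-! ### LDQL semantics -/

mutual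
/-- The S-based evaluation `⟦q⟧_W^S` of an LDQL query. -/
def evalQ (W : Web) : LDQL → Set URI → Set Mapping
  | .base l P, S =>
      evalGP (datasetW W {u' | ∃ u ∈ S, u' ∈ evalL W l u}) P
        (datasetW W {u' | ∃ u ∈ S, u' ∈ evalL W l u}).dflt
  | .seedU U0 q, _ => evalQ W q ↑U0
  | .seedV v q, _ => ⋃ u : URI, mjoin (evalQ W q {u}) {single v (.uri u)}
  | .qand q1 q2, S => mjoin (evalQ W q1 S) (evalQ W q2 S)
  | .qunion q1 q2, S => evalQ W q1 S ∪ evalQ W q2 S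
  | .proj V0 q, S => (restrictV V0) '' (evalQ W q S)

/-- The `uctx`-based evaluation `⟦l⟧_W^uctx` of a link path expression. -/
def evalL (W : Web) : LPE → URI → Set URI
  | .eps, u => if (W.adoc u).isSome then {u} else ∅
  | .pat lp, u =>
      {u' | ∃ d, W.adoc u = some d ∧ ∃ t d', W.edge d t u' d' ∧ lpMatch lp u t u'}
  | .seq l1 l2, u => {u'' | ∃ u', u' ∈ evalL W l1 u ∧ u'' ∈ evalL W l2 u'}
  | .alt l1 l2, u => evalL W l1 u ∪ evalL W l2 u
  | .star l, u =>
      {u' | (W.adoc u).isSome ∧ Relation.ReflTransGen (fun a b => b ∈ evalL W l a) u u'}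
  | .test l, u => {u' | u' = u ∧ evalL W l u ≠ ∅}
  | .sub v q, u =>
      {u' | (W.adoc u).isSome ∧ ∃ μ ∈ evalQ W q {u}, μ v = some (.uri u')}
end

/-- Semantic equivalence of LDQL queries. -/
def equivQ (q q' : LDQL) : Prop :=
  ∀ (W : Web) (S : Set URI), S.Finite → evalQ W q S = evalQ W q' S


/-! ### LPEs built only from ε, ⟨?v,q⟩ and (·)* -/

mutual
/-- All LPEs occurring in the query consist only of `ε`, `⟨?v,q⟩` and `(·)*`. -/
def LDQL.simple : LDQL → Prop
  | .base l _ => l.simple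
  | .seedU _ q => q.simple
  | .seedV _ q => q.simple
  | .qand q1 q2 => q1.simple ∧ q2.simple
  | .qunion q1 q2 => q1.simple ∧ q2.simple
  | .proj _ q => q.simple

/-- The LPE consists only of `ε`, `⟨?v,q⟩` and `(·)*`. -/
def LPE.simple : LPE → Prop
  | .eps => True
  | .pat _ => False
  | .seq _ _ => False
  | .alt _ _ => False
  | .star l => l.simple
  | .test _ => False
  | .sub _ q => q.simple
end

/-! ### Property paths under context-based semantics -/

/-- Property path expressions. -/
inductive PP where
  | uri (p : URI)
  | neg (us : List URI)
  | seq (r1 r2 : PP)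
  | alt (r1 r2 : PP)
  | star (r : PP)

/-- Terms allowed in PP-patterns: URIs, literals and variables. -/
inductive PPTerm where
  | uri (u : URI)
  | lit (l : LitId)
  | var (v : Var)

/-- The context selector `C_W`. -/
def CW (W : Web) (a : Obj) : Set RDFTriple :=
  {t | ∃ u d, a = .uri u ∧ W.adoc u = some d ∧ t ∈ W.data d ∧ t.s = .uri u}

/-- The RDF terms occurring in triples of documents of `W`. -/
def termsW (W : Web) : Set Obj :=
  {a | ∃ d ∈ W.docs, ∃ t ∈ W.data d, a = t.s.toObj ∨ a = .uri t.p ∨ a = t.o}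

/-- The binary relation on RDF terms induced by a PP expression under
context-based semantics. -/
def ppRel (W : Web) : PP → Obj → Obj → Prop
  | .uri p, a, b => ∃ s, objToSubj a = some s ∧ (⟨s, p, b⟩ : RDFTriple) ∈ CW W a
  | .neg us, a, b => ∃ p, p ∉ us ∧ ∃ s, objToSubj a = some s ∧ (⟨s, p, b⟩ : RDFTriple) ∈ CW W a
  | .seq r1 r2, a, b => ∃ m, ppRel W r1 a m ∧ ppRel W r2 m b
  | .alt r1 r2, a, b => ppRel W r1 a b ∨ ppRel W r2 a b
  | .star r, a, b => (a = b ∧ a ∈ termsW W) ∨ Relation.TransGen (ppRel W r) a b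

def PPTerm.toPval (μ : Mapping) : PPTerm → Option Obj
  | .uri u => some (.uri u)
  | .lit l => some (.lit l)
  | .var v => μ v

def ppVars (α β : PPTerm) : Set Var := {v | α = .var v ∨ β = .var v}

/-- The context-based evaluation `⟦(α,r,β)⟧_ctxt^W` of a PP-pattern. -/
def ctxtEvalPat (W : Web) (α : PPTerm) (r : PP) (β : PPTerm) : Set Mapping :=
  {μ | mdom μ = ppVars α β ∧
    ∃ a b, α.toPval μ = some a ∧ β.toPval μ = some b ∧ ppRel W r a b}

/-- PP-based SPARQL queries. -/
inductive PPQ where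
  | pat (α : PPTerm) (r : PP) (β : PPTerm)
  | and (R1 R2 : PPQ)
  | union (R1 R2 : PPQ)
  | opt (R1 R2 : PPQ)
  | filter (R : PPQ) (c : Cond)

/-- The context-based evaluation `⟦R⟧_ctxt^W` of a PP-based SPARQL query. -/
def evalPPQ (W : Web) : PPQ → Set Mapping
  | .pat α r β => ctxtEvalPat W α r β
  | .and R1 R2 => mjoin (evalPPQ W R1) (evalPPQ W R2)
  | .union R1 R2 => evalPPQ W R1 ∪ evalPPQ W R2
  | .opt R1 R2 =>
      mjoin (evalPPQ W R1) (evalPPQ W R2) ∪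
        {μ | μ ∈ evalPPQ W R1 ∧ ∀ μ2 ∈ evalPPQ W R2, ¬ compatible μ μ2}
  | .filter R c => {μ | μ ∈ evalPPQ W R ∧ condHolds μ c}

/-! ### NautiLOD -/

/-- NautiLOD expressions (without action rules). -/
inductive NLOD where
  | fwd (p : URI)
  | bwd (p : URI)
  | any
  | seq (n1 n2 : NLOD)
  | alt (n1 n2 : NLOD)
  | star (n : NLOD)
  | ask (n : NLOD) (P : GP)

/-- Dataset used for evaluating an ASK pattern over the data of a single document. -/
def askDS (W : Web) (d : Doc) : RDFDataset :=
  ⟨((W.data d : Finset RDFTriple) : Set RDFTriple), fun _ => none⟩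

/-- NautiLOD semantics `⟦n⟧_W^u`. -/
def nlEval (W : Web) : NLOD → URI → Set URI
  | .fwd p, u => {u' | ∃ d, W.adoc u = some d ∧ (⟨.uri u, p, .uri u'⟩ : RDFTriple) ∈ W.data d}
  | .bwd p, u => {u' | ∃ d, W.adoc u = some d ∧ (⟨.uri u', p, .uri u⟩ : RDFTriple) ∈ W.data d}
  | .any, u => {u' | ∃ d q, W.adoc u = some d ∧ (⟨.uri u, q, .uri u'⟩ : RDFTriple) ∈ W.data d}
  | .seq n1 n2, u =>
      {u'' | ∃ u', u' ∈ nlEval W n1 u ∧ (W.adoc u').isSome ∧ u'' ∈ nlEval W n2 u'}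
  | .alt n1 n2, u => nlEval W n1 u ∪ nlEval W n2 u
  | .star n, u =>
      {u' | Relation.ReflTransGen (fun a b => (W.adoc a).isSome ∧ b ∈ nlEval W n a) u u'}
  | .ask n P, u =>
      {u' | u' ∈ nlEval W n u ∧
        ∃ d, W.adoc u' = some d ∧ evalGP (askDS W d) P ((W.data d : Finset RDFTriple) : Set RDFTriple) ≠ ∅}

/-! ### Variables occurring in patterns and NautiLOD expressions -/

def condHasVar (v : Var) : Cond → Prop
  | .eq a b => a = .var v ∨ b = .var v
  | .neq a b => a = .var v ∨ b = .var v
  | .and c1 c2 => condHasVar v c1 ∨ condHasVar v c2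
  | .or c1 c2 => condHasVar v c1 ∨ condHasVar v c2
  | .not c => condHasVar v c

/-- The variable `v` occurs in the SPARQL graph pattern. -/
def gpHasVar (v : Var) : GP → Prop
  | .empty => False
  | .tp t => t.sj = .var v ∨ t.pr = .var v ∨ t.ob = .var v
  | .and g1 g2 => gpHasVar v g1 ∨ gpHasVar v g2
  | .union g1 g2 => gpHasVar v g1 ∨ gpHasVar v g2
  | .opt g1 g2 => gpHasVar v g1 ∨ gpHasVar v g2
  | .filter g c => gpHasVar v g ∨ condHasVar v c
  | .graphU _ g => gpHasVar v g
  | .graphV w g => v = w ∨ gpHasVar v g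
  | .bind g _ w => v = w ∨ gpHasVar v g

/-- The variable `v` occurs in the NautiLOD expression. -/
def nlodHasVar (v : Var) : NLOD → Prop
  | .fwd _ => False
  | .bwd _ => False
  | .any => False
  | .seq n1 n2 => nlodHasVar v n1 ∨ nlodHasVar v n2
  | .alt n1 n2 => nlodHasVar v n1 ∨ nlodHasVar v n2
  | .star n => nlodHasVar v n
  | .ask n P => nlodHasVar v n ∨ gpHasVar v P

/-! ### Reachability-based query semantics -/

/-- A reachability criterion. -/
def ReachCrit := RDFTriple → URI → GP → Prop

def cAll : ReachCrit := fun _ _ _ => True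

def cNone : ReachCrit := fun _ _ _ => False

/-- The list of triple patterns occurring in a SPARQL graph pattern. -/
def GP.tps : GP → List TriplePattern
  | .empty => []
  | .tp t => [t]
  | .and g1 g2 => g1.tps ++ g2.tps
  | .union g1 g2 => g1.tps ++ g2.tps
  | .opt g1 g2 => g1.tps ++ g2.tps
  | .filter g _ => g.tps
  | .graphU _ g => g.tps
  | .graphV _ g => g.tps
  | .bind g _ _ => g.tps

def cMatch : ReachCrit := fun t _ P => ∃ (μ : Mapping) (tp : TriplePattern),
  tp ∈ P.tps ∧ tpInst μ tp = some t

/-- `(c,S,P)`-reachability of a document in `W`. -/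
inductive Reachable (W : Web) (c : ReachCrit) (S : Set URI) (P : GP) : Doc → Prop where
  | seed (u : URI) (d : Doc) : u ∈ S → W.adoc u = some d → Reachable W c S P d
  | step (dsrc : Doc) (t : RDFTriple) (u : URI) (d : Doc) :
      Reachable W c S P dsrc → W.edge dsrc t u d → c t u P → Reachable W c S P d

/-- The RDF graph consisting of all triples of all `(c,S,P)`-reachable documents. -/
def reachGraph (W : Web) (c : ReachCrit) (S : Set URI) (P : GP) : Set RDFTriple :=
  {t | ∃ d, Reachable W c S P d ∧ t ∈ W.data d}

/-- The S-based evaluation of `P` over `W` under `c`-semantics. -/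
def reachEval (W : Web) (c : ReachCrit) (S : Set URI) (P : GP) : Set Mapping :=
  evalGP ⟨reachGraph W c S P, fun _ => none⟩ P (reachGraph W c S P)

/-! ### Constructions used in Theorems on c_Match and NautiLOD -/

def addFilter (v : Var) (pt : PTerm) (g : GP) : GP :=
  match pt with
  | .var _ => g
  | .term o => .filter g (.eq (.var v) (.term o))

/-- The basic LDQL query `q_k = ⟨ε,P_k⟩` associated with a triple pattern. -/
def matchQ (vs vp vo : Var) (t : TriplePattern) : LDQL :=
  .base .eps (addFilter vo t.ob (addFilter vp t.pr (addFilter vs t.sj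
    (.tp ⟨.var vs, .var vp, .var vo⟩))))

/-- An LPE whose evaluation is empty everywhere. -/
def emptyLPE (v : Var) : LPE := .sub v (.base .eps .empty)

/-- The LPE `l_Match` associated with a SPARQL graph pattern. -/
def lMatch (vs vp vo : Var) (P : GP) : LPE :=
  .star ((P.tps.map (fun t =>
      LPE.alt (.sub vs (matchQ vs vp vo t))
        (LPE.alt (.sub vp (matchQ vs vp vo t)) (.sub vo (matchQ vs vp vo t))))).foldr
    LPE.alt (emptyLPE vs))

/-- The translation `trans_N` from NautiLOD expressions to LPEs, using the
(fresh, pairwise distinct) variables `vx`, `vu`, `vp`. -/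
def transN (vx vu vp : Var) : NLOD → LPE
  | .fwd p => .pat ⟨.plus, .uri p, .star⟩
  | .bwd p => .pat ⟨.star, .uri p, .plus⟩
  | .any => .sub vx (.base .eps (.graphV vu (.tp ⟨.var vu, .var vp, .var vx⟩)))
  | .seq n1 n2 => .seq (transN vx vu vp n1) (transN vx vu vp n2)
  | .alt n1 n2 => .alt (transN vx vu vp n1) (transN vx vu vp n2)
  | .star n => .star (transN vx vu vp n)
  | .ask n P => .seq (transN vx vu vp n) (.test (.sub vx (.base .eps (.graphV vx P))))



/-! ### Auxiliary machinery for the proof -/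

lemma munion_empty_left (μ : Mapping) : munion emptyMap μ = μ := rfl

lemma compatible_empty (μ : Mapping) : compatible emptyMap μ := by
  intro v a b h; simp [emptyMap] at h

lemma single_apply (v : Var) (o : Obj) : single v o v = some o := by simp [single]

lemma single_apply_ne {v w : Var} (h : w ≠ v) (o : Obj) : single v o w = none := by
  simp [single, h]

lemma munion_none {μ1 μ2 : Mapping} {v : Var} (h1 : μ1 v = none) (h2 : μ2 v = none) :
    munion μ1 μ2 v = none := by simp [munion, h1, h2]

lemma munion_some_left {μ1 μ2 : Mapping} {v : Var} {a : Obj} (h1 : μ1 v = some a) :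
    munion μ1 μ2 v = some a := by simp [munion, h1]

lemma munion_none_left {μ1 μ2 : Mapping} {v : Var} (h1 : μ1 v = none) :
    munion μ1 μ2 v = μ2 v := by simp [munion, h1]

lemma restrictV_single (x : Var) (o : Obj) : restrictV {x} (single x o) = single x o := by
  funext v
  by_cases h : v = x <;> simp [restrictV, single, h]

lemma restrictV_apply_ne {x v : Var} (h : v ≠ x) (μ : Mapping) : restrictV {x} μ v = none := by
  simp [restrictV, h]

lemma restrictV_apply_self (x : Var) (μ : Mapping) : restrictV {x} μ x = μ x := by
  simp [restrictV]

lemma eq_single_of_support {μ : Mapping} {x : Var} {o : Obj}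
    (h : μ x = some o) (hs : ∀ v, v ≠ x → μ v = none) : μ = single x o := by
  funext v
  by_cases hv : v = x
  · subst hv; simp [single, h]
  · simp [single, hv, hs v hv]

lemma single_inj {x : Var} {o o' : Obj} (h : single x o = single x o') : o = o' := by
  have := congrFun h x
  simpa [single] using this

/-- A graph pattern whose evaluation is empty over every dataset. -/
def GPfalse : GP := .filter .empty (.neq (.term (.uri 0)) (.term (.uri 0)))

lemma evalGP_GPfalse (D : RDFDataset) (G : Set RDFTriple) : evalGP D GPfalse G = ∅ := by
  ext μ
  simp [GPfalse, evalGP, condHolds, pval]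

/-- Replace all GRAPH subpatterns by an unsatisfiable pattern. -/
def scrub : GP → GP
  | .empty => .empty
  | .tp t => .tp t
  | .and g1 g2 => .and (scrub g1) (scrub g2)
  | .union g1 g2 => .union (scrub g1) (scrub g2)
  | .opt g1 g2 => .opt (scrub g1) (scrub g2)
  | .filter g c => .filter (scrub g) c
  | .graphU _ _ => GPfalse
  | .graphV _ _ => GPfalse
  | .bind g o v => .bind (scrub g) o v

lemma evalGP_scrub (D0 D : RDFDataset) (h : ∀ u, D0.named u = none) :
    ∀ (P : GP) (G : Set RDFTriple), evalGP D0 P G = evalGP D (scrub P) G := by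
  intro P
  induction P with
  | empty => intro G; rfl
  | tp t => intro G; rfl
  | and g1 g2 ih1 ih2 => intro G; simp [evalGP, scrub, ih1, ih2]
  | union g1 g2 ih1 ih2 => intro G; simp [evalGP, scrub, ih1, ih2]
  | opt g1 g2 ih1 ih2 => intro G; simp [evalGP, scrub, ih1, ih2]
  | filter g c ih => intro G; simp [evalGP, scrub, ih]
  | graphU w g ih => intro G; rw [scrub, evalGP_GPfalse]; ext μ; simp [evalGP, h]
  | graphV v g ih => intro G; rw [scrub, evalGP_GPfalse]; ext μ; simp [evalGP, h]
  | bind g o v ih => intro G; simp [evalGP, scrub, ih]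

lemma scrub_hasVar {v : Var} : ∀ {P : GP}, gpHasVar v (scrub P) → gpHasVar v P := by
  intro P
  induction P with
  | empty => intro h; exact h
  | tp t => intro h; exact h
  | and g1 g2 ih1 ih2 => intro h; rcases h with h | h; exact Or.inl (ih1 h); exact Or.inr (ih2 h)
  | union g1 g2 ih1 ih2 => intro h; rcases h with h | h; exact Or.inl (ih1 h); exact Or.inr (ih2 h)
  | opt g1 g2 ih1 ih2 => intro h; rcases h with h | h; exact Or.inl (ih1 h); exact Or.inr (ih2 h)
  | filter g c ih => intro h; rcases h with h | h; exact Or.inl (ih h); exact Or.inr h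
  | graphU w g ih => intro h; rcases h with h | h | _ <;> simp_all [scrub, GPfalse, gpHasVar, condHasVar]
  | graphV w g ih => intro h; rcases h with h | h | _ <;> simp_all [scrub, GPfalse, gpHasVar, condHasVar]
  | bind g o w ih => intro h; rcases h with h | h; exact Or.inl h; exact Or.inr (ih h)

/-- Any solution mapping over a pattern not containing `v` leaves `v` unbound. -/
lemma evalGP_fresh {v : Var} (D : RDFDataset) :
    ∀ (P : GP), ¬ gpHasVar v P → ∀ (G : Set RDFTriple) (μ : Mapping),
      μ ∈ evalGP D P G → μ v = none := by
  intro P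
  induction P with
  | empty =>
      intro _ G μ hμ
      simp only [evalGP, Set.mem_singleton_iff] at hμ
      subst hμ; rfl
  | tp t =>
      intro hv G μ hμ
      simp only [evalGP, Set.mem_setOf_eq] at hμ
      obtain ⟨hdom, _⟩ := hμ
      by_contra hne
      have hvmem : v ∈ mdom μ := hne
      rw [hdom] at hvmem
      apply hv
      rcases hvmem with (h | h) | h
      · left
        cases hs : t.sj with
        | var w => rw [hs] at h; simp [PTerm.varsOf] at h; subst h; rfl
        | term o => rw [hs] at h; simp [PTerm.varsOf] at h
      · right; left
        cases hs : t.pr with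
        | var w => rw [hs] at h; simp [PTerm.varsOf] at h; subst h; rfl
        | term o => rw [hs] at h; simp [PTerm.varsOf] at h
      · right; right
        cases hs : t.ob with
        | var w => rw [hs] at h; simp [PTerm.varsOf] at h; subst h; rfl
        | term o => rw [hs] at h; simp [PTerm.varsOf] at h
  | and g1 g2 ih1 ih2 =>
      intro hv G μ hμ
      simp only [evalGP, mjoin, Set.mem_setOf_eq] at hμ
      obtain ⟨μ1, h1, μ2, h2, _, rfl⟩ := hμ
      exact munion_none (ih1 (fun h => hv (Or.inl h)) G μ1 h1)
        (ih2 (fun h => hv (Or.inr h)) G μ2 h2)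
  | union g1 g2 ih1 ih2 =>
      intro hv G μ hμ
      rcases hμ with h | h
      · exact ih1 (fun h' => hv (Or.inl h')) G μ h
      · exact ih2 (fun h' => hv (Or.inr h')) G μ h
  | opt g1 g2 ih1 ih2 =>
      intro hv G μ hμ
      rcases hμ with h | h
      · simp only [mjoin, Set.mem_setOf_eq] at h
        obtain ⟨μ1, h1, μ2, h2, _, rfl⟩ := h
        exact munion_none (ih1 (fun h' => hv (Or.inl h')) G μ1 h1)
          (ih2 (fun h' => hv (Or.inr h')) G μ2 h2)
      · exact ih1 (fun h' => hv (Or.inl h')) G μ h.1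
  | filter g c ih =>
      intro hv G μ hμ
      exact ih (fun h' => hv (Or.inl h')) G μ hμ.1
  | graphU w g ih =>
      intro hv G μ hμ
      simp only [evalGP, Set.mem_setOf_eq] at hμ
      obtain ⟨G', _, hμ'⟩ := hμ
      exact ih hv G' μ hμ'
  | graphV w g ih =>
      intro hv G μ hμ
      simp only [evalGP, Set.mem_setOf_eq] at hμ
      obtain ⟨u, G', _, μ', hμ', _, rfl⟩ := hμ
      have hvw : v ≠ w := fun h => hv (Or.inl h)
      exact munion_none (ih (fun h' => hv (Or.inr h')) G' μ' hμ') (single_apply_ne hvw _)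
  | bind g o w ih =>
      intro hv G μ hμ
      simp only [evalGP, Set.mem_setOf_eq] at hμ
      obtain ⟨μ0, hμ0, _, rfl⟩ := hμ
      have hvw : v ≠ w := fun h => hv (Or.inl h)
      exact munion_none (ih (fun h' => hv (Or.inr h')) G μ0 hμ0) (single_apply_ne hvw _)

/-! ### Variable bounds -/

def ptBound : PTerm → ℕ
  | .var v => v + 1
  | .term _ => 0

def condBound : Cond → ℕ
  | .eq a b => max (ptBound a) (ptBound b)
  | .neq a b => max (ptBound a) (ptBound b)
  | .and c1 c2 => max (condBound c1) (condBound c2)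
  | .or c1 c2 => max (condBound c1) (condBound c2)
  | .not c => condBound c

def gpBound : GP → ℕ
  | .empty => 0
  | .tp t => max (ptBound t.sj) (max (ptBound t.pr) (ptBound t.ob))
  | .and g1 g2 => max (gpBound g1) (gpBound g2)
  | .union g1 g2 => max (gpBound g1) (gpBound g2)
  | .opt g1 g2 => max (gpBound g1) (gpBound g2)
  | .filter g c => max (gpBound g) (condBound c)
  | .graphU _ g => gpBound g
  | .graphV v g => max (v + 1) (gpBound g)
  | .bind g _ v => max (v + 1) (gpBound g)

def nlodBound : NLOD → ℕ
  | .fwd _ => 0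
  | .bwd _ => 0
  | .any => 0
  | .seq n1 n2 => max (nlodBound n1) (nlodBound n2)
  | .alt n1 n2 => max (nlodBound n1) (nlodBound n2)
  | .star n => nlodBound n
  | .ask n P => max (nlodBound n) (gpBound P)

lemma ptBound_fresh {v : Var} {a : PTerm} (h : ptBound a ≤ v) : a ≠ .var v := by
  cases a with
  | var w => simp [ptBound] at h; intro he; cases he; omega
  | term o => simp

lemma condBound_fresh {v : Var} : ∀ {c : Cond}, condBound c ≤ v → ¬ condHasVar v c := by
  intro c
  induction c with
  | eq a b =>
      intro h hc
      simp only [condBound] at h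
      rcases hc with hc | hc
      · exact ptBound_fresh (by omega) hc
      · exact ptBound_fresh (by omega) hc
  | neq a b =>
      intro h hc
      simp only [condBound] at h
      rcases hc with hc | hc
      · exact ptBound_fresh (by omega) hc
      · exact ptBound_fresh (by omega) hc
  | and c1 c2 ih1 ih2 =>
      intro h hc
      simp only [condBound] at h
      rcases hc with hc | hc
      · exact ih1 (by omega) hc
      · exact ih2 (by omega) hc
  | or c1 c2 ih1 ih2 =>
      intro h hc
      simp only [condBound] at h
      rcases hc with hc | hc
      · exact ih1 (by omega) hc
      · exact ih2 (by omega) hc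
  | not c ih => intro h hc; exact ih h hc

lemma gpBound_fresh {v : Var} : ∀ {g : GP}, gpBound g ≤ v → ¬ gpHasVar v g := by
  intro g
  induction g with
  | empty => intro _ hc; exact hc
  | tp t =>
      intro h hc
      simp only [gpBound] at h
      rcases hc with hc | hc | hc
      · exact ptBound_fresh (by omega) hc
      · exact ptBound_fresh (by omega) hc
      · exact ptBound_fresh (by omega) hc
  | and g1 g2 ih1 ih2 =>
      intro h hc
      simp only [gpBound] at h
      rcases hc with hc | hc
      · exact ih1 (by omega) hc
      · exact ih2 (by omega) hc
  | union g1 g2 ih1 ih2 =>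
      intro h hc
      simp only [gpBound] at h
      rcases hc with hc | hc
      · exact ih1 (by omega) hc
      · exact ih2 (by omega) hc
  | opt g1 g2 ih1 ih2 =>
      intro h hc
      simp only [gpBound] at h
      rcases hc with hc | hc
      · exact ih1 (by omega) hc
      · exact ih2 (by omega) hc
  | filter g c ih =>
      intro h hc
      simp only [gpBound] at h
      rcases hc with hc | hc
      · exact ih (by omega) hc
      · exact condBound_fresh (by omega) hc
  | graphU w g ih => intro h hc; exact ih h hc
  | graphV w g ih =>
      intro h hc
      simp only [gpBound] at h
      rcases hc with hc | hc
      · subst hc; omega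
      · exact ih (by omega) hc
  | bind g o w ih =>
      intro h hc
      simp only [gpBound] at h
      rcases hc with hc | hc
      · subst hc; omega
      · exact ih (by omega) hc

lemma nlodBound_fresh {v : Var} : ∀ {n : NLOD}, nlodBound n ≤ v → ¬ nlodHasVar v n := by
  intro n
  induction n with
  | fwd p => intro _ hc; exact hc
  | bwd p => intro _ hc; exact hc
  | any => intro _ hc; exact hc
  | seq n1 n2 ih1 ih2 =>
      intro h hc
      simp only [nlodBound] at h
      rcases hc with hc | hc
      · exact ih1 (by omega) hc
      · exact ih2 (by omega) hc
  | alt n1 n2 ih1 ih2 =>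
      intro h hc
      simp only [nlodBound] at h
      rcases hc with hc | hc
      · exact ih1 (by omega) hc
      · exact ih2 (by omega) hc
  | star n ih => intro h hc; exact ih h hc
  | ask n P ih =>
      intro h hc
      simp only [nlodBound] at h
      rcases hc with hc | hc
      · exact ih (by omega) hc
      · exact gpBound_fresh (by omega) hc

/-! ### Dataset computations -/

lemma datasetW_named_eq (W : Web) (U0 : Set URI) (w : URI) (G : Set RDFTriple) :
    (datasetW W U0).named w = some G ↔
      w ∈ U0 ∧ ∃ d, W.adoc w = some d ∧ G = ↑(W.data d) := by
  cases h : W.adoc w with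
  | none => by_cases hw : w ∈ U0 <;> simp [datasetW, hw, h]
  | some d => by_cases hw : w ∈ U0 <;> simp [datasetW, hw, h, eq_comm]

lemma seedSet_singleton (W : Web) (l : LPE) (u : URI) :
    {u' | ∃ a ∈ ({u} : Set URI), u' ∈ evalL W l a} = evalL W l u := by
  ext w; simp

lemma datasetW_dflt_singleton (W : Web) (u : URI) (d : Doc) (h : W.adoc u = some d) :
    (datasetW W {u}).dflt = ↑(W.data d) := by
  ext t
  simp only [datasetW, Set.mem_setOf_eq, Set.mem_singleton_iff, Finset.coe_sort_coe]
  constructor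
  · rintro ⟨a, rfl, d', hd', ht⟩
    rw [h] at hd'; cases hd'
    exact ht
  · intro ht
    exact ⟨u, rfl, d, h, ht⟩

lemma evalGP_graphV_empty (D : RDFDataset) (x : Var) (G : Set RDFTriple) :
    evalGP D (.graphV x .empty) G =
      {μ | ∃ w G', D.named w = some G' ∧ μ = single x (.uri w)} := by
  ext μ
  simp only [evalGP, Set.mem_setOf_eq, Set.mem_singleton_iff]
  constructor
  · rintro ⟨w, G', hn, μ', hμ', _, rfl⟩
    subst hμ'
    exact ⟨w, G', hn, (munion_empty_left _).symm⟩
  · rintro ⟨w, G', hn, rfl⟩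
    exact ⟨w, G', hn, emptyMap, rfl, compatible_empty _, (munion_empty_left _).symm⟩

/-! ### The translation -/

/-- Query binding `x` to the dereferenceable URIs reachable via the LPE `l`. -/
def qEnd (x : Var) (l : LPE) : LDQL := .proj {x} (.base l (.graphV x .empty))

/-- The main translation: a query binding `x` to the URIs in `nlEval n w`
for `w` ranging over the dereferenceable URIs reachable via `pre`. -/
def qOf (x y z : Var) : NLOD → LPE → LDQL
  | .fwd p, pre => .proj {x} (.base pre (.graphV y (.tp ⟨.var y, .term (.uri p), .var x⟩)))
  | .bwd p, pre => .proj {x} (.base pre (.graphV y (.tp ⟨.var x, .term (.uri p), .var y⟩)))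
  | .any, pre => .proj {x} (.base pre (.graphV y (.tp ⟨.var y, .var z, .var x⟩)))
  | .seq n1 n2, pre => qOf x y z n2 (.seq pre (.sub x (qOf x y z n1 .eps)))
  | .alt n1 n2, pre => .qunion (qOf x y z n1 pre) (qOf x y z n2 pre)
  | .star n, pre => .qunion (qEnd x pre)
      (qOf x y z n (.seq pre (.star (.sub x (qOf x y z n .eps)))))
  | .ask n P, pre => qEnd x (.seq (.seq pre (.sub x (qOf x y z n .eps)))
      (.sub x (.qand (.base .eps (scrub P)) (.base .eps (.graphV x .empty)))))

lemma qOf_support (x y z : Var) (W : Web) :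
    ∀ (n : NLOD) (pre : LPE) (S : Set URI) (μ : Mapping),
      μ ∈ evalQ W (qOf x y z n pre) S → ∀ v, v ≠ x → μ v = none := by
  intro n
  induction n with
  | fwd p =>
      intro pre S μ hμ v hv
      simp only [qOf, evalQ, Set.mem_image] at hμ
      obtain ⟨μ', _, rfl⟩ := hμ
      exact restrictV_apply_ne hv _
  | bwd p =>
      intro pre S μ hμ v hv
      simp only [qOf, evalQ, Set.mem_image] at hμ
      obtain ⟨μ', _, rfl⟩ := hμ
      exact restrictV_apply_ne hv _
  | any =>
      intro pre S μ hμ v hv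
      simp only [qOf, evalQ, Set.mem_image] at hμ
      obtain ⟨μ', _, rfl⟩ := hμ
      exact restrictV_apply_ne hv _
  | seq n1 n2 ih1 ih2 =>
      intro pre S μ hμ v hv
      exact ih2 _ S μ hμ v hv
  | alt n1 n2 ih1 ih2 =>
      intro pre S μ hμ v hv
      simp only [qOf, evalQ, Set.mem_union] at hμ
      rcases hμ with hμ | hμ
      · exact ih1 _ S μ hμ v hv
      · exact ih2 _ S μ hμ v hv
  | star n ih =>
      intro pre S μ hμ v hv
      simp only [qOf, evalQ, Set.mem_union] at hμ
      rcases hμ with hμ | hμ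
      · simp only [qEnd, evalQ, Set.mem_image] at hμ
        obtain ⟨μ', _, rfl⟩ := hμ
        exact restrictV_apply_ne hv _
      · exact ih _ S μ hμ v hv
  | ask n P ih =>
      intro pre S μ hμ v hv
      simp only [qOf, qEnd, evalQ, Set.mem_image] at hμ
      obtain ⟨μ', _, rfl⟩ := hμ
      exact restrictV_apply_ne hv _

lemma qEnd_mem (W : Web) (x : Var) (l : LPE) (u w : URI) :
    single x (.uri w) ∈ evalQ W (qEnd x l) {u} ↔
      w ∈ evalL W l u ∧ (W.adoc w).isSome := by
  simp only [qEnd, evalQ, seedSet_singleton, Set.mem_image]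
  rw [evalGP_graphV_empty]
  constructor
  · rintro ⟨μ, ⟨w', G', hn, rfl⟩, hres⟩
    rw [restrictV_single] at hres
    have hww : w' = w := by
      have := single_inj hres
      injection this
    subst hww
    rw [datasetW_named_eq] at hn
    obtain ⟨hmem, d, hd, _⟩ := hn
    exact ⟨hmem, by simp [hd]⟩
  · rintro ⟨hmem, hs⟩
    obtain ⟨d, hd⟩ := Option.isSome_iff_exists.mp hs
    refine ⟨single x (.uri w), ⟨w, ↑(W.data d), ?_, rfl⟩, restrictV_single _ _⟩
    rw [datasetW_named_eq]
    exact ⟨hmem, d, hd, rfl⟩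

def map2 (v1 : Var) (o1 : Obj) (v2 : Var) (o2 : Obj) : Mapping :=
  fun v => if v = v1 then some o1 else if v = v2 then some o2 else none

def map3 (v1 : Var) (o1 : Obj) (v2 : Var) (o2 : Obj) (v3 : Var) (o3 : Obj) : Mapping :=
  fun v => if v = v1 then some o1 else if v = v2 then some o2 else
    if v = v3 then some o3 else none

lemma fwd_case (W : Web) (x y : Var) (hxy : x ≠ y) (U0 : Set URI) (G : Set RDFTriple)
    (p u'' : URI) :
    single x (.uri u'') ∈ (restrictV {x}) ''
        evalGP (datasetW W U0) (.graphV y (.tp ⟨.var y, .term (.uri p), .var x⟩)) G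
    ↔ ∃ w, w ∈ U0 ∧ ∃ d, W.adoc w = some d ∧
        (⟨.uri w, p, .uri u''⟩ : RDFTriple) ∈ W.data d := by
  constructor
  · rintro ⟨μ0, hμ0, hres⟩
    simp only [evalGP, Set.mem_setOf_eq] at hμ0
    obtain ⟨w, G', hn, μ', ⟨hdom, tr, htr, hinst⟩, hcomp, rfl⟩ := hμ0
    rw [datasetW_named_eq] at hn
    obtain ⟨hmem, d, hd, rfl⟩ := hn
    -- y and x are bound by μ'
    have hy : y ∈ mdom μ' := by
      rw [hdom]; simp [TriplePattern.varsOf, PTerm.varsOf]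
    have hx : x ∈ mdom μ' := by
      rw [hdom]; simp [TriplePattern.varsOf, PTerm.varsOf]
    obtain ⟨a, ha⟩ := Option.ne_none_iff_exists'.mp hy
    obtain ⟨o, ho⟩ := Option.ne_none_iff_exists'.mp hx
    have haw : a = Obj.uri w := hcomp y a (.uri w) ha (single_apply y _)
    subst haw
    -- compute the instantiated triple
    simp only [tpInst, pval, ha, ho, objToSubj, objToURI, Option.bind_eq_bind,
      Option.bind_some, Option.pure_def] at hinst
    cases hinst
    -- compute the restriction at x
    have hrx := congrFun hres x
    rw [restrictV_apply_self, munion_some_left ho, single_apply] at hrx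
    cases hrx
    exact ⟨w, hmem, d, hd, htr⟩
  · rintro ⟨w, hmem, d, hd, htr⟩
    refine ⟨munion (map2 y (.uri w) x (.uri u'')) (single y (.uri w)), ?_, ?_⟩
    · simp only [evalGP, Set.mem_setOf_eq]
      refine ⟨w, ↑(W.data d), ?_, map2 y (.uri w) x (.uri u''), ⟨?_, ?_⟩, ?_, rfl⟩
      · rw [datasetW_named_eq]; exact ⟨hmem, d, hd, rfl⟩
      · ext v
        by_cases hv : v = y <;> by_cases hv2 : v = x <;>
          simp [mdom, map2, TriplePattern.varsOf, PTerm.varsOf, hv, hv2, hxy]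
      · refine ⟨⟨.uri w, p, .uri u''⟩, htr, ?_⟩
        simp [tpInst, pval, map2, objToSubj, objToURI, hxy]
      · intro v a b ha hb
        by_cases hv : v = y
        · subst hv
          have hb' : b = Obj.uri w := by simpa [single_apply] using hb.symm
          have ha' : a = Obj.uri w := by simpa [map2] using ha.symm
          rw [ha', hb']
        · rw [single_apply_ne hv] at hb
          cases hb
    · funext v
      by_cases hv : v = x
      · subst hv
        rw [restrictV_apply_self, single_apply,
          munion_some_left (show map2 y (Obj.uri w) v (Obj.uri u'') v = some (Obj.uri u'')
            from by simp [map2, hxy])]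
      · rw [restrictV_apply_ne hv, single_apply_ne hv]

lemma bwd_case (W : Web) (x y : Var) (hxy : x ≠ y) (U0 : Set URI) (G : Set RDFTriple)
    (p u'' : URI) :
    single x (.uri u'') ∈ (restrictV {x}) ''
        evalGP (datasetW W U0) (.graphV y (.tp ⟨.var x, .term (.uri p), .var y⟩)) G
    ↔ ∃ w, w ∈ U0 ∧ ∃ d, W.adoc w = some d ∧
        (⟨.uri u'', p, .uri w⟩ : RDFTriple) ∈ W.data d := by
  constructor
  · rintro ⟨μ0, hμ0, hres⟩
    simp only [evalGP, Set.mem_setOf_eq] at hμ0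
    obtain ⟨w, G', hn, μ', ⟨hdom, tr, htr, hinst⟩, hcomp, rfl⟩ := hμ0
    rw [datasetW_named_eq] at hn
    obtain ⟨hmem, d, hd, rfl⟩ := hn
    have hy : y ∈ mdom μ' := by
      rw [hdom]; simp [TriplePattern.varsOf, PTerm.varsOf]
    have hx : x ∈ mdom μ' := by
      rw [hdom]; simp [TriplePattern.varsOf, PTerm.varsOf]
    obtain ⟨a, ha⟩ := Option.ne_none_iff_exists'.mp hy
    obtain ⟨o, ho⟩ := Option.ne_none_iff_exists'.mp hx
    have haw : a = Obj.uri w := hcomp y a (.uri w) ha (single_apply y _)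
    subst haw
    have hrx := congrFun hres x
    rw [restrictV_apply_self, munion_some_left ho, single_apply] at hrx
    cases hrx
    simp only [tpInst, pval, ha, ho, objToSubj, objToURI, Option.bind_eq_bind,
      Option.bind_some, Option.pure_def] at hinst
    cases hinst
    exact ⟨w, hmem, d, hd, htr⟩
  · rintro ⟨w, hmem, d, hd, htr⟩
    refine ⟨munion (map2 y (.uri w) x (.uri u'')) (single y (.uri w)), ?_, ?_⟩
    · simp only [evalGP, Set.mem_setOf_eq]
      refine ⟨w, ↑(W.data d), ?_, map2 y (.uri w) x (.uri u''), ⟨?_, ?_⟩, ?_, rfl⟩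
      · rw [datasetW_named_eq]; exact ⟨hmem, d, hd, rfl⟩
      · ext v
        by_cases hv : v = y <;> by_cases hv2 : v = x <;>
          simp [mdom, map2, TriplePattern.varsOf, PTerm.varsOf, hv, hv2, hxy]
      · refine ⟨⟨.uri u'', p, .uri w⟩, htr, ?_⟩
        simp [tpInst, pval, map2, objToSubj, objToURI, hxy]
      · intro v a b ha hb
        by_cases hv : v = y
        · subst hv
          have hb' : b = Obj.uri w := by simpa [single_apply] using hb.symm
          have ha' : a = Obj.uri w := by simpa [map2] using ha.symm
          rw [ha', hb']
        · rw [single_apply_ne hv] at hb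
          cases hb
    · funext v
      by_cases hv : v = x
      · subst hv
        rw [restrictV_apply_self, single_apply,
          munion_some_left (show map2 y (Obj.uri w) v (Obj.uri u'') v = some (Obj.uri u'')
            from by simp [map2, hxy])]
      · rw [restrictV_apply_ne hv, single_apply_ne hv]

lemma any_case (W : Web) (x y z : Var) (hxy : x ≠ y) (hxz : x ≠ z) (hyz : y ≠ z)
    (U0 : Set URI) (G : Set RDFTriple) (u'' : URI) :
    single x (.uri u'') ∈ (restrictV {x}) ''
        evalGP (datasetW W U0) (.graphV y (.tp ⟨.var y, .var z, .var x⟩)) G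
    ↔ ∃ w, w ∈ U0 ∧ ∃ d, W.adoc w = some d ∧ ∃ q,
        (⟨.uri w, q, .uri u''⟩ : RDFTriple) ∈ W.data d := by
  constructor
  · rintro ⟨μ0, hμ0, hres⟩
    simp only [evalGP, Set.mem_setOf_eq] at hμ0
    obtain ⟨w, G', hn, μ', ⟨hdom, tr, htr, hinst⟩, hcomp, rfl⟩ := hμ0
    rw [datasetW_named_eq] at hn
    obtain ⟨hmem, d, hd, rfl⟩ := hn
    have hy : y ∈ mdom μ' := by
      rw [hdom]; simp [TriplePattern.varsOf, PTerm.varsOf]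
    have hz : z ∈ mdom μ' := by
      rw [hdom]; simp [TriplePattern.varsOf, PTerm.varsOf]
    have hx : x ∈ mdom μ' := by
      rw [hdom]; simp [TriplePattern.varsOf, PTerm.varsOf]
    obtain ⟨a, ha⟩ := Option.ne_none_iff_exists'.mp hy
    obtain ⟨b, hb⟩ := Option.ne_none_iff_exists'.mp hz
    obtain ⟨o, ho⟩ := Option.ne_none_iff_exists'.mp hx
    have haw : a = Obj.uri w := hcomp y a (.uri w) ha (single_apply y _)
    subst haw
    have hrx := congrFun hres x
    rw [restrictV_apply_self, munion_some_left ho, single_apply] at hrx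
    cases hrx
    simp only [tpInst, pval, ha, hb, ho, objToSubj, Option.bind_eq_bind,
      Option.bind_some, Option.pure_def] at hinst
    cases b with
    | uri q =>
        simp only [objToURI, Option.bind_some] at hinst
        cases hinst
        exact ⟨w, hmem, d, hd, q, htr⟩
    | bnode b0 => simp [objToURI] at hinst
    | lit l0 => simp [objToURI] at hinst
  · rintro ⟨w, hmem, d, hd, q, htr⟩
    refine ⟨munion (map3 y (.uri w) z (.uri q) x (.uri u'')) (single y (.uri w)), ?_, ?_⟩
    · simp only [evalGP, Set.mem_setOf_eq]
      refine ⟨w, ↑(W.data d), ?_, map3 y (.uri w) z (.uri q) x (.uri u''), ⟨?_, ?_⟩, ?_, rfl⟩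
      · rw [datasetW_named_eq]; exact ⟨hmem, d, hd, rfl⟩
      · ext v
        by_cases hv : v = y <;> by_cases hv2 : v = z <;> by_cases hv3 : v = x <;>
          simp [mdom, map3, TriplePattern.varsOf, PTerm.varsOf, hv, hv2, hv3, hxy, hxz, hyz,
            Ne.symm hxy, Ne.symm hxz, Ne.symm hyz]
      · refine ⟨⟨.uri w, q, .uri u''⟩, htr, ?_⟩
        simp [tpInst, pval, map3, objToSubj, objToURI, hxy, hxz, hyz, Ne.symm hyz]
      · intro v a b ha hb
        by_cases hv : v = y
        · subst hv
          have hb' : b = Obj.uri w := by simpa [single_apply] using hb.symm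
          have ha' : a = Obj.uri w := by simpa [map3] using ha.symm
          rw [ha', hb']
        · rw [single_apply_ne hv] at hb
          cases hb
    · funext v
      by_cases hv : v = x
      · subst hv
        rw [restrictV_apply_self, single_apply,
          munion_some_left
            (show map3 y (Obj.uri w) z (Obj.uri q) v (Obj.uri u'') v = some (Obj.uri u'')
              from by simp [map3, hxy, hxz])]
      · rw [restrictV_apply_ne hv, single_apply_ne hv]

lemma askSub_eval (W : Web) (x : Var) (P : GP) (hfr : ¬ gpHasVar x P) (w : URI) :
    evalL W (.sub x (.qand (.base .eps (scrub P)) (.base .eps (.graphV x .empty)))) w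
      = {w' | w' = w ∧ ∃ d, W.adoc w = some d ∧
          evalGP (askDS W d) P ↑(W.data d) ≠ ∅} := by
  cases h : W.adoc w with
  | none =>
      ext w'
      simp [evalL, h]
  | some d =>
      have hU : {u' | ∃ a ∈ ({w} : Set URI), u' ∈ evalL W .eps a} = ({w} : Set URI) := by
        rw [seedSet_singleton]; simp [evalL, h]
      have hdfl : (datasetW W {w}).dflt = ↑(W.data d) := datasetW_dflt_singleton W w d h
      have hQ : evalQ W (.qand (.base .eps (scrub P)) (.base .eps (.graphV x .empty))) {w}
          = mjoin (evalGP (askDS W d) P ↑(W.data d)) {single x (.uri w)} := by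
        have hset : {μ | ∃ w1 G', (datasetW W ({w} : Set URI)).named w1 = some G' ∧
            μ = single x (Obj.uri w1)} = ({single x (.uri w)} : Set Mapping) := by
          ext μ
          constructor
          · rintro ⟨w', G', hn, rfl⟩
            rw [datasetW_named_eq] at hn
            obtain ⟨hmem, _, _, _⟩ := hn
            rw [Set.mem_singleton_iff] at hmem
            subst hmem; rfl
          · rintro rfl
            exact ⟨w, ↑(W.data d), by rw [datasetW_named_eq]; exact ⟨rfl, d, h, rfl⟩, rfl⟩
        simp only [evalQ]
        rw [hU, hdfl, evalGP_graphV_empty, hset,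
          ← evalGP_scrub (askDS W d) (datasetW W {w}) (fun _ => rfl) P]
      ext w'
      simp only [evalL, hQ, Set.mem_setOf_eq, h, Option.isSome_some, true_and]
      constructor
      · rintro ⟨μ, hμ, hx⟩
        obtain ⟨μ1, h1, μ2, h2, hc, rfl⟩ := hμ
        rw [Set.mem_singleton_iff] at h2
        subst h2
        have hμ1x : μ1 x = none := evalGP_fresh _ P hfr _ μ1 h1
        rw [munion_none_left hμ1x, single_apply] at hx
        have hww : w = w' := by injection (Option.some.inj hx)
        subst hww
        exact ⟨rfl, d, rfl, fun he => by rw [he] at h1; exact h1⟩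
      · rintro ⟨rfl, d', hd', hne⟩
        cases hd'
        obtain ⟨μ1, hμ1⟩ := Set.nonempty_iff_ne_empty.mpr hne
        have hμ1x : μ1 x = none := evalGP_fresh _ P hfr _ μ1 hμ1
        refine ⟨munion μ1 (single x (.uri w')), ⟨μ1, hμ1, single x (.uri w'), rfl, ?_, rfl⟩, ?_⟩
        · intro v a b ha hb
          by_cases hv : v = x
          · subst hv; rw [hμ1x] at ha; cases ha
          · rw [single_apply_ne hv] at hb; cases hb
        · rw [munion_none_left hμ1x, single_apply]

lemma sub_eval (W : Web) (x y z : Var) (n : NLOD)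
    (hspec : ∀ (pre : LPE) (u u'' : URI),
      single x (.uri u'') ∈ evalQ W (qOf x y z n pre) {u} ↔
        ∃ w, w ∈ evalL W pre u ∧ (W.adoc w).isSome ∧ u'' ∈ nlEval W n w)
    (w : URI) :
    evalL W (.sub x (qOf x y z n .eps)) w
      = {w' | (W.adoc w).isSome ∧ w' ∈ nlEval W n w} := by
  ext w'
  simp only [evalL, Set.mem_setOf_eq]
  constructor
  · rintro ⟨hs, μ, hμ, hx⟩
    refine ⟨hs, ?_⟩
    have hsing : μ = single x (.uri w') :=
      eq_single_of_support hx (fun v hv => qOf_support x y z W n .eps {w} μ hμ v hv)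
    rw [hsing, hspec .eps w w'] at hμ
    obtain ⟨a, haL, _, hmem⟩ := hμ
    have haw : a = w := by
      have heps : evalL W .eps w = {w} := by simp [evalL, hs]
      rw [heps] at haL
      exact haL
    subst haw
    exact hmem
  · rintro ⟨hs, hmem⟩
    refine ⟨hs, single x (.uri w'), ?_, single_apply _ _⟩
    rw [hspec .eps w w']
    exact ⟨w, by simp [evalL, hs], hs, hmem⟩

lemma evalL_seq (W : Web) (l1 l2 : LPE) (u : URI) :
    evalL W (.seq l1 l2) u = {u'' | ∃ u', u' ∈ evalL W l1 u ∧ u'' ∈ evalL W l2 u'} := by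
  simp [evalL]

lemma evalL_star (W : Web) (l : LPE) (u : URI) :
    evalL W (.star l) u = {u' | (W.adoc u).isSome ∧
      Relation.ReflTransGen (fun a b => b ∈ evalL W l a) u u'} := by
  simp [evalL]

theorem qOf_spec (x y z : Var) (hxy : x ≠ y) (hxz : x ≠ z) (hyz : y ≠ z) (W : Web) :
    ∀ n : NLOD, ¬ nlodHasVar x n → ∀ (pre : LPE) (u u'' : URI),
      (single x (.uri u'') ∈ evalQ W (qOf x y z n pre) {u} ↔
        ∃ w, w ∈ evalL W pre u ∧ (W.adoc w).isSome ∧ u'' ∈ nlEval W n w) := by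
  intro n
  induction n with
  | fwd p =>
      intro _ pre u u''
      rw [show evalQ W (qOf x y z (.fwd p) pre) {u} = (restrictV {x}) ''
          evalGP (datasetW W (evalL W pre u))
            (.graphV y (.tp ⟨.var y, .term (.uri p), .var x⟩))
            (datasetW W (evalL W pre u)).dflt from by
        simp [qOf, evalQ, seedSet_singleton]]
      rw [fwd_case W x y hxy]
      constructor
      · rintro ⟨w, hw, d, hd, ht⟩
        refine ⟨w, hw, by simp [hd], ?_⟩
        simp only [nlEval, Set.mem_setOf_eq]
        exact ⟨d, hd, ht⟩
      · rintro ⟨w, hw, _, hm⟩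
        simp only [nlEval, Set.mem_setOf_eq] at hm
        obtain ⟨d, hd, ht⟩ := hm
        exact ⟨w, hw, d, hd, ht⟩
  | bwd p =>
      intro _ pre u u''
      rw [show evalQ W (qOf x y z (.bwd p) pre) {u} = (restrictV {x}) ''
          evalGP (datasetW W (evalL W pre u))
            (.graphV y (.tp ⟨.var x, .term (.uri p), .var y⟩))
            (datasetW W (evalL W pre u)).dflt from by
        simp [qOf, evalQ, seedSet_singleton]]
      rw [bwd_case W x y hxy]
      constructor
      · rintro ⟨w, hw, d, hd, ht⟩
        refine ⟨w, hw, by simp [hd], ?_⟩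
        simp only [nlEval, Set.mem_setOf_eq]
        exact ⟨d, hd, ht⟩
      · rintro ⟨w, hw, _, hm⟩
        simp only [nlEval, Set.mem_setOf_eq] at hm
        obtain ⟨d, hd, ht⟩ := hm
        exact ⟨w, hw, d, hd, ht⟩
  | any =>
      intro _ pre u u''
      rw [show evalQ W (qOf x y z .any pre) {u} = (restrictV {x}) ''
          evalGP (datasetW W (evalL W pre u))
            (.graphV y (.tp ⟨.var y, .var z, .var x⟩))
            (datasetW W (evalL W pre u)).dflt from by
        simp [qOf, evalQ, seedSet_singleton]]
      rw [any_case W x y z hxy hxz hyz]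
      constructor
      · rintro ⟨w, hw, d, hd, q, ht⟩
        refine ⟨w, hw, by simp [hd], ?_⟩
        simp only [nlEval, Set.mem_setOf_eq]
        exact ⟨d, q, hd, ht⟩
      · rintro ⟨w, hw, _, hm⟩
        simp only [nlEval, Set.mem_setOf_eq] at hm
        obtain ⟨d, q, hd, ht⟩ := hm
        exact ⟨w, hw, d, hd, q, ht⟩
  | seq n1 n2 ih1 ih2 =>
      intro hx pre u u''
      have hx1 : ¬ nlodHasVar x n1 := fun h => hx (Or.inl h)
      have hx2 : ¬ nlodHasVar x n2 := fun h => hx (Or.inr h)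
      rw [show qOf x y z (.seq n1 n2) pre
          = qOf x y z n2 (.seq pre (.sub x (qOf x y z n1 .eps))) from by simp [qOf]]
      rw [ih2 hx2 _ u u'']
      have hsub := sub_eval W x y z n1 (ih1 hx1)
      constructor
      · rintro ⟨w', hw', hs', hm'⟩
        have hw'2 : ∃ a, a ∈ evalL W pre u ∧
            w' ∈ evalL W (.sub x (qOf x y z n1 .eps)) a := by
          simpa [evalL] using hw'
        obtain ⟨a, ha, hw'3⟩ := hw'2
        rw [hsub a] at hw'3
        obtain ⟨hsa, hmem1⟩ := hw'3
        refine ⟨a, ha, hsa, ?_⟩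
        simp only [nlEval, Set.mem_setOf_eq]
        exact ⟨w', hmem1, hs', hm'⟩
      · rintro ⟨w, hw, hsw, hm⟩
        simp only [nlEval, Set.mem_setOf_eq] at hm
        obtain ⟨w', hm1, hs', hm2⟩ := hm
        refine ⟨w', ?_, hs', hm2⟩
        have : w' ∈ evalL W (.sub x (qOf x y z n1 .eps)) w := by
          rw [hsub w]; exact ⟨hsw, hm1⟩
        simp only [evalL, Set.mem_setOf_eq]
        exact ⟨w, hw, this⟩
  | alt n1 n2 ih1 ih2 =>
      intro hx pre u u''
      have hx1 : ¬ nlodHasVar x n1 := fun h => hx (Or.inl h)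
      have hx2 : ¬ nlodHasVar x n2 := fun h => hx (Or.inr h)
      rw [show evalQ W (qOf x y z (.alt n1 n2) pre) {u}
          = evalQ W (qOf x y z n1 pre) {u} ∪ evalQ W (qOf x y z n2 pre) {u} from by
        simp [qOf, evalQ]]
      rw [Set.mem_union, ih1 hx1 pre u u'', ih2 hx2 pre u u'']
      constructor
      · rintro (⟨w, hw, hs, hm⟩ | ⟨w, hw, hs, hm⟩)
        · exact ⟨w, hw, hs, Or.inl hm⟩
        · exact ⟨w, hw, hs, Or.inr hm⟩
      · rintro ⟨w, hw, hs, hm⟩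
        rcases hm with hm | hm
        · exact Or.inl ⟨w, hw, hs, hm⟩
        · exact Or.inr ⟨w, hw, hs, hm⟩
  | star n ih =>
      intro hx pre u u''
      have hxn : ¬ nlodHasVar x n := hx
      have hrel : (fun c b => b ∈ evalL W (.sub x (qOf x y z n .eps)) c)
          = (fun c b => (W.adoc c).isSome ∧ b ∈ nlEval W n c) := by
        funext c b
        rw [sub_eval W x y z n (ih hxn) c]
        rfl
      have hstar : ∀ w, evalL W (.star (.sub x (qOf x y z n .eps))) w
          = {a | (W.adoc w).isSome ∧ Relation.ReflTransGen
              (fun c b => (W.adoc c).isSome ∧ b ∈ nlEval W n c) w a} := by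
        intro w
        rw [evalL_star, hrel]
      rw [show evalQ W (qOf x y z (.star n) pre) {u}
          = evalQ W (qEnd x pre) {u}
            ∪ evalQ W (qOf x y z n
                (.seq pre (.star (.sub x (qOf x y z n .eps))))) {u} from by
        simp [qOf, evalQ]]
      rw [Set.mem_union, qEnd_mem, ih hxn _ u u'']
      constructor
      · rintro (⟨hmem, hs⟩ | ⟨a, haL, hsa, hm⟩)
        · refine ⟨u'', hmem, hs, ?_⟩
          simp only [nlEval, Set.mem_setOf_eq]
          exact Relation.ReflTransGen.refl
        · rw [evalL_seq] at haL
          obtain ⟨w, hw, ha2⟩ := haL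
          rw [hstar w] at ha2
          obtain ⟨hsw, hrt⟩ := ha2
          refine ⟨w, hw, hsw, ?_⟩
          simp only [nlEval, Set.mem_setOf_eq]
          exact hrt.tail ⟨hsa, hm⟩
      · rintro ⟨w, hw, hsw, hm⟩
        simp only [nlEval, Set.mem_setOf_eq] at hm
        rcases Relation.ReflTransGen.cases_tail hm with heq | ⟨a, hra, hstep⟩
        · left
          subst heq
          exact ⟨hw, hsw⟩
        · right
          refine ⟨a, ?_, hstep.1, hstep.2⟩
          rw [evalL_seq]
          refine ⟨w, hw, ?_⟩
          rw [hstar w]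
          exact ⟨hsw, hra⟩
  | ask n P ih =>
      intro hx pre u u''
      have hxn : ¬ nlodHasVar x n := fun h => hx (Or.inl h)
      have hxP : ¬ gpHasVar x P := fun h => hx (Or.inr h)
      rw [show qOf x y z (.ask n P) pre = qEnd x
          (.seq (.seq pre (.sub x (qOf x y z n .eps)))
            (.sub x (.qand (.base .eps (scrub P)) (.base .eps (.graphV x .empty)))))
        from by simp [qOf]]
      rw [qEnd_mem]
      have hsub := sub_eval W x y z n (ih hxn)
      constructor
      · rintro ⟨hmem, hsu⟩
        rw [evalL_seq] at hmem
        obtain ⟨a, ha1, hask⟩ := hmem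
        rw [evalL_seq] at ha1
        obtain ⟨w, hw, ha⟩ := ha1
        rw [hsub w] at ha
        obtain ⟨hsw, hmem1⟩ := ha
        rw [askSub_eval W x P hxP a] at hask
        obtain ⟨rfl, d, hd, hne⟩ := hask
        refine ⟨w, hw, hsw, ?_⟩
        simp only [nlEval, Set.mem_setOf_eq]
        exact ⟨hmem1, d, hd, hne⟩
      · rintro ⟨w, hw, hsw, hm⟩
        simp only [nlEval, Set.mem_setOf_eq] at hm
        obtain ⟨hmem1, d, hd, hne⟩ := hm
        refine ⟨?_, by simp [hd]⟩
        rw [evalL_seq]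
        refine ⟨u'', ?_, ?_⟩
        · rw [evalL_seq]
          refine ⟨w, hw, ?_⟩
          rw [hsub w]
          exact ⟨hsw, hmem1⟩
        · rw [askSub_eval W x P hxP u'']
          exact ⟨rfl, d, hd, hne⟩

/-- Every NautiLOD expression is equivalent to an LDQL query
with a single free variable. -/
theorem NautiLOD_expressible_in_LDQL (n : NLOD) :
    ∃ (x : Var) (q : LDQL), ∀ (W : Web) (u u' : URI), (W.adoc u).isSome →
      (u' ∈ nlEval W n u ↔ single x (.uri u') ∈ evalQ W q {u}) := by
  refine ⟨nlodBound n, qOf (nlodBound n) (nlodBound n + 1) (nlodBound n + 2) n .eps, ?_⟩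
  intro W u u' hu
  have hx : ¬ nlodHasVar (nlodBound n) n := nlodBound_fresh le_rfl
  have hxy : nlodBound n ≠ nlodBound n + 1 := by omega
  have hxz : nlodBound n ≠ nlodBound n + 2 := by omega
  have hyz : nlodBound n + 1 ≠ nlodBound n + 2 := by omega
  rw [qOf_spec (nlodBound n) (nlodBound n + 1) (nlodBound n + 2)
      hxy hxz hyz W n hx .eps u u']
  constructor
  · intro hm
    exact ⟨u, by simp [evalL, hu], hu, hm⟩
  · rintro ⟨w, hw, _, hm⟩
    have heps : evalL W .eps u = {u} := by simp [evalL, hu]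
    rw [heps, Set.mem_singleton_iff] at hw
    subst hw
    exact hm

end

end LDQLFormal
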